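/- Watson–Sokal Borel summability (converse direction): Let σ, R > 0 and let B be analytic on the strip S_σ = {τ ∈ ℂ : dist(τ, ℝ₊) < 1/σ} satisfying |B(τ)| ≤ C exp(|τ|/R) there. Then the function h(ζ) = ζ^{−1} ∫₀^∞ e^{−τ/ζ} B(τ) dτ is well defined and analytic on the disc C_R = {ζ ∈ ℂ : Re ζ^{−1} > R^{−1}} and, with a_m = B^{(m)}(0), satisfies for every R' < R bounds |h(ζ) − Σ_{m=0}^{N−1} a_m ζ^m| ≤ A σ'^N N! |ζ|^N uniformly in N and ζ ∈ C_{R'}, for some A, σ' > 0. -/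

import Mathlib

open MeasureTheory Complex Set Metric Filter Topology
open scoped Nat

namespace WSaux

/-- The strip. -/
def strip (σ : ℝ) : Set ℂ := {τ : ℂ | ∃ x : ℝ, 0 ≤ x ∧ dist τ (x : ℂ) < 1 / σ}

lemma isOpen_strip (σ : ℝ) : IsOpen (strip σ) := by
  rw [Metric.isOpen_iff]
  rintro τ ⟨x, hx, hd⟩
  refine ⟨1 / σ - dist τ (x : ℂ), by linarith, ?_⟩
  intro w hw
  exact ⟨x, hx, by have := dist_triangle w τ (x : ℂ); simp only [mem_ball] at hw; linarith⟩

lemma real_mem_strip {σ : ℝ} (hσ : 0 < σ) {x : ℝ} (hx : 0 ≤ x) : (x : ℂ) ∈ strip σ :=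
  ⟨x, hx, by simpa using by positivity⟩

lemma closedBall_subset_strip {σ : ℝ} (hσ : 0 < σ) {x : ℝ} (hx : 0 ≤ x) :
    closedBall (x : ℂ) ((2 * σ)⁻¹) ⊆ strip σ := by
  intro w hw
  refine ⟨x, hx, lt_of_le_of_lt (mem_closedBall.mp hw) ?_⟩
  rw [one_div]
  rw [inv_lt_inv₀ (by positivity) (by positivity)]
  linarith

/-- Cauchy estimate. -/
lemma cauchy_bound {f : ℂ → ℂ} {c : ℂ} {ρ M : ℝ} (hρ : 0 < ρ)
    (hf : DifferentiableOn ℂ f (closedBall c ρ))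
    (hM : ∀ z ∈ closedBall c ρ, ‖f z‖ ≤ M) (n : ℕ) :
    ‖iteratedDeriv n f c‖ ≤ n ! * M * ρ⁻¹ ^ n := by
  obtain ⟨ρ', rfl⟩ : ∃ r : NNReal, (r : ℝ) = ρ := ⟨⟨ρ, hρ.le⟩, rfl⟩
  have hρ0 : (0 : NNReal) < ρ' := by exact_mod_cast hρ
  have hp := hf.hasFPowerSeriesOnBall hρ0
  have key : iteratedDeriv n f c = n ! • (cauchyPowerSeries f c ρ' n fun _ => (1 : ℂ)) := by
    rw [iteratedDeriv_eq_iteratedFDeriv, ← hp.factorial_smul (y := (1 : ℂ)) n]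
  rw [key]
  have h1 : ‖(cauchyPowerSeries f c ρ' n fun _ => (1 : ℂ))‖ ≤ ‖cauchyPowerSeries f c ρ' n‖ := by
    have := (cauchyPowerSeries f c ρ' n).le_opNorm fun _ => (1 : ℂ)
    simpa using this
  have h2 := norm_cauchyPowerSeries_le f c ρ' n
  have hint : IntervalIntegrable (fun θ : ℝ => ‖f (circleMap c ρ' θ)‖) volume 0 (2 * Real.pi) := by
    apply ContinuousOn.intervalIntegrable
    apply ContinuousOn.norm
    apply hf.continuousOn.comp (continuous_circleMap c ρ').continuousOn
    intro θ _
    exact circleMap_mem_closedBall c (by exact_mod_cast hρ.le) θ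
  have h3 : (∫ θ : ℝ in (0)..2 * Real.pi, ‖f (circleMap c ρ' θ)‖) ≤ 2 * Real.pi * M := by
    have : (∫ θ : ℝ in (0)..2 * Real.pi, ‖f (circleMap c ρ' θ)‖) ≤
        ∫ _ : ℝ in (0)..2 * Real.pi, M := by
      apply intervalIntegral.integral_mono_on Real.two_pi_pos.le hint
        intervalIntegrable_const
      intro θ _
      exact hM _ (circleMap_mem_closedBall c (by exact_mod_cast hρ.le) θ)
    simpa [mul_comm] using this
  have hM0 : 0 ≤ M := le_trans (norm_nonneg _) (hM c (mem_closedBall_self (by exact_mod_cast hρ.le)))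
  calc ‖n ! • (cauchyPowerSeries f c ρ' n fun _ => (1 : ℂ))‖
      = n ! * ‖(cauchyPowerSeries f c ρ' n fun _ => (1 : ℂ))‖ := by
        rw [← Nat.cast_smul_eq_nsmul ℝ, norm_smul]; simp
    _ ≤ n ! * (((2 * Real.pi)⁻¹ * ∫ θ : ℝ in (0)..2 * Real.pi,
          ‖f (circleMap c ρ' θ)‖) * |(ρ' : ℝ)|⁻¹ ^ n) := by
        refine mul_le_mul_of_nonneg_left (h1.trans h2) (by positivity)
    _ ≤ n ! * M * (ρ' : ℝ)⁻¹ ^ n := by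
        rw [_root_.abs_of_nonneg hρ.le, ← mul_assoc]
        have hI : (2 * Real.pi)⁻¹ * (∫ θ : ℝ in (0)..2 * Real.pi, ‖f (circleMap c ρ' θ)‖) ≤ M := by
          rw [inv_mul_le_iff₀ Real.two_pi_pos]; linarith
        gcongr


variable {σ R C : ℝ} {B : ℂ → ℂ}

lemma iteratedDerivWithin_eq_iteratedDeriv_of_isOpen {f : ℂ → ℂ} {s : Set ℂ} (hs : IsOpen s)
    {x : ℂ} (hx : x ∈ s) (n : ℕ) : iteratedDerivWithin n f s x = iteratedDeriv n f x := by
  rw [iteratedDerivWithin_eq_iteratedFDerivWithin, iteratedDeriv_eq_iteratedFDeriv,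
    iteratedFDerivWithin_of_isOpen n hs hx]

lemma analyticOnNhd_iteratedDeriv (hσ : 0 < σ) (hB : DifferentiableOn ℂ B (strip σ)) (k : ℕ) :
    AnalyticOnNhd ℂ (iteratedDeriv k B) (strip σ) := by
  induction k with
  | zero => simpa [iteratedDeriv_zero] using hB.analyticOnNhd (isOpen_strip σ)
  | succ k ih => rw [iteratedDeriv_succ]; exact ih.deriv

lemma deriv_bound (hσ : 0 < σ) (hR : 0 < R) (hC : 0 < C)
    (hB : DifferentiableOn ℂ B (strip σ))
    (hb : ∀ τ ∈ strip σ, ‖B τ‖ ≤ C * Real.exp (‖τ‖ / R))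
    (k : ℕ) {x : ℝ} (hx : 0 ≤ x) :
    ‖iteratedDeriv k B x‖
      ≤ k ! * (C * Real.exp ((2 * σ * R)⁻¹) * Real.exp (x / R)) * (2 * σ) ^ k := by
  have hρ : (0 : ℝ) < (2 * σ)⁻¹ := by positivity
  have hsub := closedBall_subset_strip hσ hx
  have hM : ∀ z ∈ closedBall (x : ℂ) ((2 * σ)⁻¹),
      ‖B z‖ ≤ C * Real.exp ((2 * σ * R)⁻¹) * Real.exp (x / R) := by
    intro z hz
    refine (hb z (hsub hz)).trans ?_
    rw [mul_assoc, ← Real.exp_add]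
    apply mul_le_mul_of_nonneg_left _ hC.le
    apply Real.exp_le_exp.mpr
    have h1 : ‖z‖ ≤ x + (2 * σ)⁻¹ := by
      have := norm_sub_norm_le z (x : ℂ)
      have h2 : ‖z - (x : ℂ)‖ ≤ (2 * σ)⁻¹ := by
        simpa [dist_eq_norm] using mem_closedBall.mp hz
      have h3 : ‖(x : ℂ)‖ = x := by
        simp [Complex.norm_real, _root_.abs_of_nonneg hx]
      linarith
    have h4 : ‖z‖ / R ≤ (x + (2 * σ)⁻¹) / R := by gcongr
    refine h4.trans (le_of_eq ?_)
    field_simp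
    ring
  have := cauchy_bound hρ (hB.mono hsub) hM k
  rwa [inv_inv] at this


lemma norm_exp_div (τ : ℝ) (ζ : ℂ) :
    ‖Complex.exp (-(τ : ℂ) / ζ)‖ = Real.exp (-(τ * (ζ⁻¹).re)) := by
  rw [Complex.norm_exp]
  congr 1
  rw [div_eq_mul_inv, neg_mul, Complex.neg_re, Complex.re_ofReal_mul]

lemma contOn_exp (ζ : ℂ) : Continuous (fun τ : ℝ => Complex.exp (-(τ : ℂ) / ζ)) :=
  Complex.continuous_exp.comp ((Complex.continuous_ofReal.neg).div_const ζ)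

lemma key_integrable {f : ℂ → ℂ} (hσ : 0 < σ) (hR : 0 < R)
    (hf : ContinuousOn f (strip σ)) {D : ℝ} (hD0 : 0 ≤ D)
    (hD : ∀ x : ℝ, 0 ≤ x → ‖f x‖ ≤ D * Real.exp (x / R))
    {ζ : ℂ} (hu : R⁻¹ < (ζ⁻¹).re) :
    IntegrableOn (fun τ : ℝ => Complex.exp (-(τ : ℂ) / ζ) * f τ) (Ioi 0) := by
  set u := (ζ⁻¹).re with hu_def
  have hpos : 0 < u - R⁻¹ := by
    have h0 : 0 < R⁻¹ := by positivity
    linarith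
  have hg : IntegrableOn (fun τ : ℝ => D * Real.exp (-(u - R⁻¹) * τ)) (Ioi 0) :=
    (exp_neg_integrableOn_Ioi 0 hpos).const_mul D
  apply Integrable.mono' hg
  · apply ContinuousOn.aestronglyMeasurable _ measurableSet_Ioi
    exact ((contOn_exp ζ).continuousOn).mul
      (hf.comp Complex.continuous_ofReal.continuousOn
        (fun x hx => real_mem_strip hσ (le_of_lt hx)))
  · rw [ae_restrict_iff' measurableSet_Ioi]
    apply ae_of_all
    intro τ hτ
    have hτ0 : (0:ℝ) ≤ τ := (le_of_lt hτ)
    rw [norm_mul, norm_exp_div]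
    calc Real.exp (-(τ * u)) * ‖f ↑τ‖
        ≤ Real.exp (-(τ * u)) * (D * Real.exp (τ / R)) := by
          exact mul_le_mul_of_nonneg_left (hD τ hτ0) (Real.exp_nonneg _)
      _ = D * Real.exp (-(u - R⁻¹) * τ) := by
          rw [mul_comm, mul_assoc, ← Real.exp_add]
          congr 2
          field_simp
          ring

lemma key_norm_integral {f : ℂ → ℂ} (hσ : 0 < σ) (hR : 0 < R)
    (hf : ContinuousOn f (strip σ)) {D δ : ℝ} (hδ : 0 < δ) (hD0 : 0 ≤ D)
    (hD : ∀ x : ℝ, 0 ≤ x → ‖f x‖ ≤ D * Real.exp (x / R))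
    {ζ : ℂ} (hu : R⁻¹ + δ ≤ (ζ⁻¹).re) :
    ‖∫ τ in Ioi (0:ℝ), Complex.exp (-(τ : ℂ) / ζ) * f τ‖
      ≤ D * ∫ τ in Ioi (0:ℝ), Real.exp (-δ * τ) := by
  rw [← integral_const_mul]
  apply norm_integral_le_of_norm_le
  · exact (exp_neg_integrableOn_Ioi 0 hδ).const_mul D
  · rw [ae_restrict_iff' measurableSet_Ioi]
    apply ae_of_all
    intro τ hτ
    have hτ0 : (0:ℝ) ≤ τ := le_of_lt hτ
    rw [norm_mul, norm_exp_div]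
    calc Real.exp (-(τ * (ζ⁻¹).re)) * ‖f ↑τ‖
        ≤ Real.exp (-(τ * (ζ⁻¹).re)) * (D * Real.exp (τ / R)) := by
          exact mul_le_mul_of_nonneg_left (hD τ hτ0) (Real.exp_nonneg _)
      _ = D * Real.exp (-((ζ⁻¹).re - R⁻¹) * τ) := by
          rw [mul_comm, mul_assoc, ← Real.exp_add]
          congr 2
          field_simp
          ring
      _ ≤ D * Real.exp (-δ * τ) := by
          apply mul_le_mul_of_nonneg_left _ hD0
          apply Real.exp_le_exp.mpr
          nlinarith


lemma deriv_bound' (hσ : 0 < σ) (hR : 0 < R) (hC : 0 < C)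
    (hB : DifferentiableOn ℂ B (strip σ))
    (hb : ∀ τ ∈ strip σ, ‖B τ‖ ≤ C * Real.exp (‖τ‖ / R))
    (k : ℕ) {x : ℝ} (hx : 0 ≤ x) :
    ‖iteratedDeriv k B x‖
      ≤ (k ! * (C * Real.exp ((2 * σ * R)⁻¹)) * (2 * σ) ^ k) * Real.exp (x / R) := by
  have := deriv_bound hσ hR hC hB hb k hx
  calc ‖iteratedDeriv k B ↑x‖
      ≤ k ! * (C * Real.exp ((2 * σ * R)⁻¹) * Real.exp (x / R)) * (2 * σ) ^ k := this
    _ = (k ! * (C * Real.exp ((2 * σ * R)⁻¹)) * (2 * σ) ^ k) * Real.exp (x / R) := by ring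

lemma ftc_step (hσ : 0 < σ) (hR : 0 < R) (hC : 0 < C)
    (hB : DifferentiableOn ℂ B (strip σ))
    (hb : ∀ τ ∈ strip σ, ‖B τ‖ ≤ C * Real.exp (‖τ‖ / R)) (k : ℕ)
    {ζ : ℂ} (hu : R⁻¹ < (ζ⁻¹).re) :
    (∫ τ in Ioi (0:ℝ), Complex.exp (-(τ : ℂ) / ζ) * iteratedDeriv (k+1) B τ)
      = ζ⁻¹ * (∫ τ in Ioi (0:ℝ), Complex.exp (-(τ : ℂ) / ζ) * iteratedDeriv k B τ)
        - iteratedDeriv k B 0 := by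
  have hcont : ∀ j, ContinuousOn (iteratedDeriv j B) (strip σ) := fun j =>
    (analyticOnNhd_iteratedDeriv hσ hB j).continuousOn
  have hint : ∀ j, IntegrableOn
      (fun τ : ℝ => Complex.exp (-(τ:ℂ)/ζ) * iteratedDeriv j B τ) (Ioi 0) := fun j =>
    key_integrable hσ hR (hcont j) (by positivity) (fun x hx => deriv_bound' hσ hR hC hB hb j hx) hu
  have hderiv : ∀ τ : ℝ, 0 ≤ τ → HasDerivAt
      (fun t : ℝ => Complex.exp (-(t:ℂ)/ζ) * iteratedDeriv k B t)
      (Complex.exp (-(τ:ℂ)/ζ) * iteratedDeriv (k+1) B τ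
        - ζ⁻¹ * (Complex.exp (-(τ:ℂ)/ζ) * iteratedDeriv k B τ)) τ := by
    intro τ hτ
    have hmem : ((τ:ℂ)) ∈ strip σ := real_mem_strip hσ hτ
    have h1 : HasDerivAt (fun w : ℂ => Complex.exp (-w/ζ))
        (Complex.exp (-(τ:ℂ)/ζ) * (-1/ζ)) (τ:ℂ) := by
      have h := ((hasDerivAt_id ((τ:ℂ))).neg.div_const ζ).cexp
      simpa [neg_div] using h
    have h2 : HasDerivAt (iteratedDeriv k B) (iteratedDeriv (k+1) B (τ:ℂ)) (τ:ℂ) := by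
      rw [iteratedDeriv_succ]
      exact ((analyticOnNhd_iteratedDeriv hσ hB k) _ hmem).differentiableAt.hasDerivAt
    have h3 := (h1.mul h2).comp_ofReal
    convert h3 using 1
    · rfl
    ring
  have hpos : 0 < (ζ⁻¹).re - R⁻¹ := by
    have h0 : 0 < R⁻¹ := by positivity
    linarith
  have htend : Tendsto (fun τ : ℝ => Complex.exp (-(τ:ℂ)/ζ) * iteratedDeriv k B τ)
      atTop (𝓝 0) := by
    set D := k ! * (C * Real.exp ((2 * σ * R)⁻¹)) * (2 * σ) ^ k with hD
    apply squeeze_zero_norm' (a := fun τ : ℝ => D * Real.exp (-(((ζ⁻¹).re - R⁻¹) * τ)))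
    · filter_upwards [Filter.eventually_ge_atTop (0:ℝ)] with τ hτ
      rw [norm_mul, norm_exp_div]
      calc Real.exp (-(τ * (ζ⁻¹).re)) * ‖iteratedDeriv k B ↑τ‖
          ≤ Real.exp (-(τ * (ζ⁻¹).re)) * (D * Real.exp (τ / R)) :=
            mul_le_mul_of_nonneg_left (deriv_bound' hσ hR hC hB hb k hτ) (Real.exp_nonneg _)
        _ = D * Real.exp (-(((ζ⁻¹).re - R⁻¹) * τ)) := by
            rw [mul_comm, mul_assoc, ← Real.exp_add]
            congr 2
            field_simp
            ring
    · have h := Real.tendsto_exp_neg_atTop_nhds_zero.comp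
        (Filter.tendsto_id.const_mul_atTop hpos)
      have h2 := h.const_mul D
      simpa [Function.comp_def, mul_zero] using h2
  have hFTC := integral_Ioi_of_hasDerivAt_of_tendsto'
    (f' := fun τ : ℝ => Complex.exp (-(τ:ℂ)/ζ) * iteratedDeriv (k+1) B τ
        - ζ⁻¹ * (Complex.exp (-(τ:ℂ)/ζ) * iteratedDeriv k B τ))
    (fun x hx => hderiv x hx) ((hint (k+1)).sub ((hint k).const_mul ζ⁻¹)) htend
  rw [integral_sub (hint (k+1)) ((hint k).const_mul ζ⁻¹), integral_const_mul] at hFTC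
  simp only [Complex.ofReal_zero, zero_div, neg_zero, Complex.exp_zero, one_mul] at hFTC
  linear_combination hFTC


lemma zeta_ne_zero {ζ : ℂ} (hR : 0 < R) (hu : R⁻¹ < (ζ⁻¹).re) : ζ ≠ 0 := by
  intro h
  rw [h] at hu
  simp at hu
  have : 0 < R⁻¹ := by positivity
  linarith

lemma expansion (hσ : 0 < σ) (hR : 0 < R) (hC : 0 < C)
    (hB : DifferentiableOn ℂ B (strip σ))
    (hb : ∀ τ ∈ strip σ, ‖B τ‖ ≤ C * Real.exp (‖τ‖ / R))
    {ζ : ℂ} (hu : R⁻¹ < (ζ⁻¹).re) (N : ℕ) :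
    ζ⁻¹ * (∫ τ in Ioi (0:ℝ), Complex.exp (-(τ:ℂ)/ζ) * B τ)
      = (∑ m ∈ Finset.range N, iteratedDeriv m B 0 * ζ ^ m)
        + ζ ^ N * (iteratedDeriv N B 0
            + ∫ τ in Ioi (0:ℝ), Complex.exp (-(τ:ℂ)/ζ) * iteratedDeriv (N+1) B τ) := by
  have hζ : ζ ≠ 0 := zeta_ne_zero hR hu
  induction N with
  | zero =>
    simp only [Finset.range_zero, Finset.sum_empty, zero_add, pow_zero, one_mul]
    rw [ftc_step hσ hR hC hB hb 0 hu]
    simp [iteratedDeriv_zero]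
  | succ N ih =>
    rw [ih, Finset.sum_range_succ]
    have hstep := ftc_step hσ hR hC hB hb (N+1) hu
    rw [hstep]
    have hinv : ζ * ζ⁻¹ = 1 := mul_inv_cancel₀ hζ
    have h1 : ζ ^ (N+1) * ζ⁻¹ = ζ ^ N := by
      rw [pow_succ, mul_assoc, hinv, mul_one]
    linear_combination
      (-(∫ τ in Ioi (0:ℝ), Complex.exp (-(τ:ℂ)/ζ) * iteratedDeriv (N+1) B τ)) * h1

end WSaux

/-- **Watson–Sokal, converse direction.** Let `σ, R > 0` and `B` analytic
on the strip `S_σ = {τ : dist(τ, ℝ₊) < 1/σ}` with `|B(τ)| ≤ C e^{|τ|/R}` there. Then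
`h(ζ) = ζ⁻¹∫₀^∞ e^{−τ/ζ} B(τ) dτ` is well defined (the integral converges absolutely)
and analytic on `C_R = {ζ : Re ζ⁻¹ > R⁻¹}`, and with `a_m = B^{(m)}(0)` it satisfies,
for every `R' < R`, bounds `|h(ζ) − Σ_{m<N} a_m ζ^m| ≤ A σ'^N N! |ζ|^N` uniformly in `N`
and `ζ ∈ C_{R'}` for some `A, σ' > 0`. -/
theorem watson_sokal_converse
    (σ R C : ℝ) (hσ : 0 < σ) (hR : 0 < R) (hC : 0 < C)
    (B : ℂ → ℂ)
    (hB : DifferentiableOn ℂ B {τ : ℂ | ∃ x : ℝ, 0 ≤ x ∧ dist τ (x : ℂ) < 1 / σ})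
    (hbound : ∀ τ ∈ {τ : ℂ | ∃ x : ℝ, 0 ≤ x ∧ dist τ (x : ℂ) < 1 / σ},
      ‖B τ‖ ≤ C * Real.exp (‖τ‖ / R)) :
    (∀ ζ : ℂ, R⁻¹ < (ζ⁻¹).re →
        IntegrableOn (fun τ : ℝ => Complex.exp (-(τ : ℂ) / ζ) * B τ) (Ioi (0 : ℝ))) ∧
    DifferentiableOn ℂ
      (fun ζ : ℂ => ζ⁻¹ * ∫ τ in Ioi (0 : ℝ), Complex.exp (-(τ : ℂ) / ζ) * B τ)
      {ζ : ℂ | R⁻¹ < (ζ⁻¹).re} ∧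
    ∀ R' : ℝ, 0 < R' → R' < R →
      ∃ A σ' : ℝ, 0 < A ∧ 0 < σ' ∧
        ∀ (N : ℕ) (ζ : ℂ), R'⁻¹ < (ζ⁻¹).re →
          ‖(ζ⁻¹ * ∫ τ in Ioi (0 : ℝ), Complex.exp (-(τ : ℂ) / ζ) * B τ)
              - ∑ m ∈ Finset.range N,
                  iteratedDerivWithin m B
                    {τ : ℂ | ∃ x : ℝ, 0 ≤ x ∧ dist τ (x : ℂ) < 1 / σ} 0 * ζ ^ m‖
            ≤ A * σ' ^ N * (N ! : ℝ) * ‖ζ‖ ^ N := by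
  rw [show {τ : ℂ | ∃ x : ℝ, 0 ≤ x ∧ dist τ (x : ℂ) < 1 / σ} = WSaux.strip σ from rfl]
    at hB hbound ⊢
  have hBc : ContinuousOn B (WSaux.strip σ) := hB.continuousOn
  have hDB : ∀ x : ℝ, 0 ≤ x → ‖B x‖ ≤ C * Real.exp (x / R) := by
    intro x hx
    have h := hbound x (WSaux.real_mem_strip hσ hx)
    rwa [Complex.norm_real, Real.norm_eq_abs, _root_.abs_of_nonneg hx] at h
  have part1 : ∀ ζ : ℂ, R⁻¹ < (ζ⁻¹).re →
      IntegrableOn (fun τ : ℝ => Complex.exp (-(τ : ℂ) / ζ) * B τ) (Ioi (0 : ℝ)) :=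
    fun ζ hu => WSaux.key_integrable hσ hR hBc hC.le hDB hu
  refine ⟨part1, ?_, ?_⟩
  · -- differentiability
    intro ζ₀ hζ₀
    simp only [mem_setOf_eq] at hζ₀
    have hζ0 : ζ₀ ≠ 0 := WSaux.zeta_ne_zero hR hζ₀
    have hn0 : 0 < ‖ζ₀‖ := norm_pos_iff.mpr hζ0
    set u₁ := (R⁻¹ + (ζ₀⁻¹).re) / 2 with hu₁def
    have hu₁R : R⁻¹ < u₁ := by rw [hu₁def]; linarith
    have hu₁lt : u₁ < (ζ₀⁻¹).re := by rw [hu₁def]; linarith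
    set c := u₁ - R⁻¹ with hcdef
    have hc : 0 < c := by rw [hcdef]; linarith
    have hcontinv : ContinuousAt (fun ζ : ℂ => (ζ⁻¹).re) ζ₀ :=
      Complex.continuous_re.continuousAt.comp (continuousAt_inv₀ hζ0)
    have h1 : ∀ᶠ ζ in 𝓝 ζ₀, u₁ < (ζ⁻¹).re := hcontinv (Ioi_mem_nhds hu₁lt)
    have h2 : ∀ᶠ ζ in 𝓝 ζ₀, ‖ζ₀‖ / 2 < ‖ζ‖ :=
      continuous_norm.continuousAt (Ioi_mem_nhds (by linarith))
    obtain ⟨ε, hε, hball⟩ := Metric.eventually_nhds_iff_ball.mp (h1.and h2)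
    set K : ℝ := C * (2 / c) * (4 / ‖ζ₀‖ ^ 2) with hKdef
    have hres := hasDerivAt_integral_of_dominated_loc_of_deriv_le (μ := volume.restrict (Ioi 0))
      (F := fun (ζ : ℂ) (τ : ℝ) => Complex.exp (-(τ : ℂ) / ζ) * B τ)
      (F' := fun (ζ : ℂ) (τ : ℝ) => Complex.exp (-(τ : ℂ) / ζ) * ((τ : ℂ) / ζ ^ 2) * B τ)
      (bound := fun τ : ℝ => K * Real.exp (-(c / 2) * τ))
      (Metric.ball_mem_nhds ζ₀ hε) ?_ (part1 ζ₀ hζ₀) ?_ ?_ ?_ ?_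
    · exact ((differentiableAt_inv hζ0).mul hres.2.differentiableAt).differentiableWithinAt
    · apply Filter.Eventually.of_forall
      intro ζ
      apply ContinuousOn.aestronglyMeasurable _ measurableSet_Ioi
      exact ((WSaux.contOn_exp ζ).continuousOn).mul
        (hBc.comp Complex.continuous_ofReal.continuousOn
          (fun x hx => WSaux.real_mem_strip hσ (le_of_lt hx)))
    · apply ContinuousOn.aestronglyMeasurable _ measurableSet_Ioi
      apply ContinuousOn.mul _ (hBc.comp Complex.continuous_ofReal.continuousOn
          (fun x hx => WSaux.real_mem_strip hσ (le_of_lt hx)))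
      exact ((WSaux.contOn_exp ζ₀).continuousOn).mul
        ((Complex.continuous_ofReal.div_const _).continuousOn)
    · rw [ae_restrict_iff' measurableSet_Ioi]
      apply ae_of_all
      intro τ hτ ζ hζball
      obtain ⟨hζu, hζnorm⟩ := hball ζ hζball
      have hτ0 : (0:ℝ) < τ := hτ
      have hnζ : 0 < ‖ζ‖ := by linarith
      rw [norm_mul, norm_mul, WSaux.norm_exp_div]
      have hnd : ‖(τ : ℂ) / ζ ^ 2‖ = τ / ‖ζ‖ ^ 2 := by
        rw [norm_div, norm_pow, Complex.norm_real, Real.norm_eq_abs,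
          _root_.abs_of_nonneg hτ0.le]
      rw [hnd]
      have hBτ : ‖B τ‖ ≤ C * Real.exp (τ / R) := hDB τ hτ0.le
      have hτle : τ ≤ (2 / c) * Real.exp ((c / 2) * τ) := by
        have h := Real.add_one_le_exp ((c / 2) * τ)
        have h2 : (c / 2) * τ ≤ Real.exp ((c / 2) * τ) := by nlinarith
        calc τ = (2 / c) * (c / 2 * τ) := by field_simp
          _ ≤ (2 / c) * Real.exp (c / 2 * τ) := by gcongr
      have hdiv : τ / ‖ζ‖ ^ 2 ≤ τ * (4 / ‖ζ₀‖ ^ 2) := by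
        rw [div_le_iff₀ (by positivity : (0:ℝ) < ‖ζ‖ ^ 2)]
        have h4 : ‖ζ₀‖ ^ 2 ≤ 4 * ‖ζ‖ ^ 2 := by nlinarith
        have h5 : (1:ℝ) ≤ 4 / ‖ζ₀‖ ^ 2 * ‖ζ‖ ^ 2 := by
          rw [div_mul_eq_mul_div, le_div_iff₀ (by positivity)]
          linarith
        nlinarith [mul_le_mul_of_nonneg_left h5 hτ0.le]
      calc Real.exp (-(τ * (ζ⁻¹).re)) * (τ / ‖ζ‖ ^ 2) * ‖B ↑τ‖
          ≤ Real.exp (-(τ * u₁)) * ((2 / c) * Real.exp ((c / 2) * τ) * (4 / ‖ζ₀‖ ^ 2))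
              * (C * Real.exp (τ / R)) := by
            apply mul_le_mul
            · apply mul_le_mul
              · apply Real.exp_le_exp.mpr; nlinarith
              · calc τ / ‖ζ‖ ^ 2 ≤ τ * (4 / ‖ζ₀‖ ^ 2) := hdiv
                  _ ≤ (2 / c) * Real.exp ((c / 2) * τ) * (4 / ‖ζ₀‖ ^ 2) := by
                      apply mul_le_mul_of_nonneg_right hτle (by positivity)
              · positivity
              · positivity
            · exact hBτ
            · positivity
            · positivity
        _ = K * Real.exp (-(τ * u₁) + (c / 2) * τ + τ / R) := by
            rw [hKdef, Real.exp_add, Real.exp_add]; ring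
        _ ≤ K * Real.exp (-(c / 2) * τ) := by
            apply mul_le_mul_of_nonneg_left _ (by positivity)
            apply Real.exp_le_exp.mpr
            have : τ / R = τ * R⁻¹ := by rw [div_eq_mul_inv]
            rw [this, hcdef]
            nlinarith
    · exact (exp_neg_integrableOn_Ioi 0 (by positivity)).const_mul K
    · rw [ae_restrict_iff' measurableSet_Ioi]
      apply ae_of_all
      intro τ hτ ζ hζball
      obtain ⟨hζu, hζnorm⟩ := hball ζ hζball
      have hnζ : ζ ≠ 0 := by
        intro h
        rw [h, norm_zero] at hζnorm
        linarith
      have hd := (((hasDerivAt_inv hnζ).const_mul (-(τ:ℂ))).cexp).mul_const (B τ)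
      have heq : (fun ζ : ℂ => Complex.exp (-(τ:ℂ) * ζ⁻¹) * B ↑τ)
          = fun ζ : ℂ => Complex.exp (-(τ : ℂ) / ζ) * B ↑τ := by
        funext w; rw [div_eq_mul_inv]
      rw [heq] at hd
      convert hd using 1
      · rfl
      simp only [div_eq_mul_inv]
      ring
  · -- the bounds
    intro R' hR'0 hR'R
    have hRR' : R⁻¹ < R'⁻¹ := inv_strictAnti₀ hR'0 hR'R
    set δ := R'⁻¹ - R⁻¹ with hδdef
    have hδ : 0 < δ := by rw [hδdef]; linarith
    set K := ∫ τ in Ioi (0:ℝ), Real.exp (-δ * τ) with hKdef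
    have hK0 : 0 ≤ K := integral_nonneg fun τ => Real.exp_nonneg _
    set CB := C * Real.exp ((2 * σ * R)⁻¹) with hCBdef
    have hCB0 : 0 < CB := by positivity
    refine ⟨CB * (1 + 2 * σ * K), 4 * σ, by positivity, by positivity, ?_⟩
    intro N ζ hu'
    have huR : R⁻¹ < (ζ⁻¹).re := lt_trans hRR' hu'
    have hexp := WSaux.expansion hσ hR hC hB hbound huR N
    have hiter : ∀ m : ℕ, iteratedDerivWithin m B (WSaux.strip σ) 0 = iteratedDeriv m B 0 :=
      fun m => WSaux.iteratedDerivWithin_eq_iteratedDeriv_of_isOpen (WSaux.isOpen_strip σ)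
        (by simpa using WSaux.real_mem_strip hσ (le_refl (0:ℝ))) m
    simp only [hiter]
    rw [hexp, add_sub_cancel_left, norm_mul, norm_pow]
    have ha : ‖iteratedDeriv N B 0‖ ≤ (N ! : ℝ) * CB * (2 * σ) ^ N := by
      have h := WSaux.deriv_bound' hσ hR hC hB hbound N (le_refl (0:ℝ))
      simpa [hCBdef] using h
    have hInt : ‖∫ τ in Ioi (0:ℝ), Complex.exp (-(τ:ℂ)/ζ) * iteratedDeriv (N+1) B τ‖
        ≤ (((N+1)! : ℝ) * CB * (2 * σ) ^ (N+1)) * K := by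
      rw [hKdef]
      apply WSaux.key_norm_integral hσ hR
        ((WSaux.analyticOnNhd_iteratedDeriv hσ hB (N+1)).continuousOn) hδ (by positivity)
        (fun x hx => by
          have h := WSaux.deriv_bound' hσ hR hC hB hbound (N+1) hx
          rw [hCBdef]
          exact h)
      rw [hδdef]
      linarith
    have h2N : ((N:ℝ) + 1) ≤ 2 ^ N := by
      have := Nat.lt_two_pow_self (n := N)
      exact_mod_cast this
    have hT1 : (N ! : ℝ) * CB * (2 * σ) ^ N ≤ (N ! : ℝ) * CB * (4 * σ) ^ N := by
      apply mul_le_mul_of_nonneg_left _ (by positivity)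
      apply pow_le_pow_left₀ (by positivity) (by linarith)
    have hT2 : (((N+1)! : ℝ) * CB * (2 * σ) ^ (N+1)) * K
        ≤ (N ! : ℝ) * CB * ((4 * σ) ^ N * (2 * σ * K)) := by
      have e1 : (((N+1)! : ℝ)) = ((N:ℝ) + 1) * (N ! : ℝ) := by
        push_cast [Nat.factorial_succ]; ring
      have e2 : (2 * σ) ^ (N+1) = (2 * σ) ^ N * (2 * σ) := pow_succ _ _
      calc (((N+1)! : ℝ) * CB * (2 * σ) ^ (N+1)) * K
          = (((N:ℝ) + 1) * (2 * σ) ^ N) * ((N ! : ℝ) * CB * (2 * σ) * K) := by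
            rw [e1, e2]; ring
        _ ≤ ((2:ℝ) ^ N * (2 * σ) ^ N) * ((N ! : ℝ) * CB * (2 * σ) * K) := by
            apply mul_le_mul_of_nonneg_right _ (by positivity)
            apply mul_le_mul_of_nonneg_right h2N (by positivity)
        _ = (N ! : ℝ) * CB * ((4 * σ) ^ N * (2 * σ * K)) := by
            rw [← mul_pow]
            have hb : (2:ℝ) * (2 * σ) = 4 * σ := by ring
            rw [hb]; ring
    calc ‖ζ‖ ^ N * ‖iteratedDeriv N B 0
            + ∫ τ in Ioi (0:ℝ), Complex.exp (-(τ:ℂ)/ζ) * iteratedDeriv (N+1) B τ‖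
        ≤ ‖ζ‖ ^ N * ((N ! : ℝ) * CB * (2 * σ) ^ N
            + (((N+1)! : ℝ) * CB * (2 * σ) ^ (N+1)) * K) := by
          apply mul_le_mul_of_nonneg_left _ (by positivity)
          exact (norm_add_le _ _).trans (add_le_add ha hInt)
      _ ≤ ‖ζ‖ ^ N * (CB * (1 + 2 * σ * K) * (4 * σ) ^ N * (N ! : ℝ)) := by
          apply mul_le_mul_of_nonneg_left _ (by positivity)
          calc (N ! : ℝ) * CB * (2 * σ) ^ N + (((N+1)! : ℝ) * CB * (2 * σ) ^ (N+1)) * K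
              ≤ (N ! : ℝ) * CB * (4 * σ) ^ N
                  + (N ! : ℝ) * CB * ((4 * σ) ^ N * (2 * σ * K)) := add_le_add hT1 hT2
            _ = CB * (1 + 2 * σ * K) * (4 * σ) ^ N * (N ! : ℝ) := by ring
      _ = CB * (1 + 2 * σ * K) * (4 * σ) ^ N * (N ! : ℝ) * ‖ζ‖ ^ N := by ring
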